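/- If the Apéry set of S is β-rectangular, then β_i = γ_i for every i = 2, …, ν. -/

import Mathlib

open Finset

/-- `S` is a numerical semigroup: a submonoid of `(ℕ, +)` with finite complement. -/
def IsNumSgp (S : Set ℕ) : Prop :=
  0 ∈ S ∧ (∀ a ∈ S, ∀ b ∈ S, a + b ∈ S) ∧ (Sᶜ : Set ℕ).Finite

/-- `s` belongs to the Apéry set of `S` with respect to `m`:
`s ∈ S` and `s - m ∉ S` (i.e. no `u ∈ S` with `u + m = s`). -/
def InApery (S : Set ℕ) (m s : ℕ) : Prop :=
  s ∈ S ∧ ∀ u ∈ S, u + m ≠ s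

def AperySet (S : Set ℕ) (m : ℕ) : Set ℕ := {s | InApery S m s}

/-- `ordS S s` is the largest `h` such that `s` is a sum of `h` nonzero elements of `S`. -/
noncomputable def ordS (S : Set ℕ) (s : ℕ) : ℕ :=
  sSup {h : ℕ | ∃ f : Fin h → ℕ, (∀ j, f j ∈ S ∧ f j ≠ 0) ∧ ∑ j, f j = s}

/-- `g` generates `S`. -/
def Generates (S : Set ℕ) {ν : ℕ} (g : Fin ν → ℕ) : Prop :=
  ∀ s, s ∈ S ↔ ∃ lam : Fin ν → ℕ, ∑ i, lam i * g i = s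

/-- `g` is a minimal generating system of `S`: it generates `S`
and no `g i` is generated by the remaining generators. -/
def MinimalGen (S : Set ℕ) {ν : ℕ} (g : Fin ν → ℕ) : Prop :=
  Generates S g ∧ ∀ i, ¬ ∃ lam : Fin ν → ℕ, lam i = 0 ∧ ∑ j, lam j * g j = g i

/-- `lam` is a maximal representation of `s`: the coefficient sum equals `ordS S s`. -/
def IsMaxRep (S : Set ℕ) {ν : ℕ} (g : Fin ν → ℕ) (lam : Fin ν → ℕ) (s : ℕ) : Prop :=
  ∑ i, lam i * g i = s ∧ ∑ i, lam i = ordS S s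

/-- `s` has a unique maximal representation. -/
def UniqueMaxRep (S : Set ℕ) {ν : ℕ} (g : Fin ν → ℕ) (s : ℕ) : Prop :=
  ∃! lam : Fin ν → ℕ, IsMaxRep S g lam s

/-- `β_i = max {h | h g_i ∈ Ap(S) and ord(h g_i) = h}`. -/
noncomputable def betaN (S : Set ℕ) (m : ℕ) {ν : ℕ} (g : Fin ν → ℕ) (i : Fin ν) : ℕ :=
  sSup {h : ℕ | InApery S m (h * g i) ∧ ordS S (h * g i) = h}

/-- `γ_i = max {h | h g_i ∈ Ap(S), ord(h g_i) = h and h g_i has a unique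
maximal representation}`. -/
noncomputable def gammaN (S : Set ℕ) (m : ℕ) {ν : ℕ} (g : Fin ν → ℕ) (i : Fin ν) : ℕ :=
  sSup {h : ℕ | InApery S m (h * g i) ∧ ordS S (h * g i) = h ∧ UniqueMaxRep S g (h * g i)}

/-- `B = {Σ_{i≥2} λ_i g_i : 0 ≤ λ_i ≤ β_i}`. -/
def Bset (S : Set ℕ) (m : ℕ) {ν : ℕ} [NeZero ν] (g : Fin ν → ℕ) : Set ℕ :=
  {s | ∃ lam : Fin ν → ℕ, lam 0 = 0 ∧ (∀ i, lam i ≤ betaN S m g i) ∧ ∑ i, lam i * g i = s}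

/-- `Γ = {Σ_{i≥2} λ_i g_i : 0 ≤ λ_i ≤ γ_i}`. -/
def GammaSet (S : Set ℕ) (m : ℕ) {ν : ℕ} [NeZero ν] (g : Fin ν → ℕ) : Set ℕ :=
  {s | ∃ lam : Fin ν → ℕ, lam 0 = 0 ∧ (∀ i, lam i ≤ gammaN S m g i) ∧ ∑ i, lam i * g i = s}

/-- `s ⪯_M t`. -/
def predM (S : Set ℕ) (s t : ℕ) : Prop :=
  ∃ u ∈ S, s + u = t ∧ ordS S s + ordS S u = ordS S t

/-!
Every maximal representation `ρ` of an Apéry element `u` lies in the box `ρ₁ = 0`, `ρⱼ ≤ βⱼ`: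
`ρ₁ > 0` would put `u - m` in `S`, and each partial sum `ρⱼ gⱼ` is again an Apéry element, of
order `ρⱼ` because the order is superadditive and bounded below by coefficient sums. Under β-rectangularity the top corner
`Σ βⱼ gⱼ` of the box is an Apéry element, so its order is exactly `Σ βⱼ`, and hence every vector
of the box is a maximal representation of its value. If `λ` were a maximal representation of
`βᵢ gᵢ` other than `βᵢ eᵢ`, then `λᵢ < βᵢ`, so `λ + eᵢ` lies in the box; it represents
`(βᵢ + 1) gᵢ`, which is then an Apéry element of order `βᵢ + 1`, contradicting the choice of `βᵢ`.
-/

def summandCounts (S : Set ℕ) (s : ℕ) : Set ℕ :=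
  {h | ∃ f : Fin h → ℕ, (∀ j, f j ∈ S ∧ f j ≠ 0) ∧ ∑ j, f j = s}

def betaSet (S : Set ℕ) (m : ℕ) {ν : ℕ} (g : Fin ν → ℕ) (i : Fin ν) : Set ℕ :=
  {h | InApery S m (h * g i) ∧ ordS S (h * g i) = h}

theorem sum_mul_add_sum_tsub_mul {ι : Type*} [Fintype ι] {μ ρ : ι → ℕ} (hμ : μ ≤ ρ)
    (w : ι → ℕ) : ∑ i, μ i * w i + ∑ i, (ρ - μ) i * w i = ∑ i, ρ i * w i := by
  rw [← sum_add_distrib]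
  exact sum_congr rfl fun i _ => by rw [← add_mul, Pi.sub_apply, add_tsub_cancel_of_le (hμ i)]

theorem sum_single_mul {ν : ℕ} (g : Fin ν → ℕ) (i : Fin ν) (c : ℕ) :
    ∑ j, (Pi.single i c : Fin ν → ℕ) j * g j = c * g i := by
  simp [Pi.single_apply]

section Order

variable {S : Set ℕ}

theorem le_of_mem_summandCounts {s h : ℕ} (hh : h ∈ summandCounts S s) : h ≤ s := by
  obtain ⟨f, hf, rfl⟩ := hh
  calc h = ∑ _j : Fin h, 1 := by simp
    _ ≤ ∑ j, f j := sum_le_sum fun j _ => Nat.one_le_iff_ne_zero.mpr (hf j).2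

theorem bddAbove_summandCounts (s : ℕ) : BddAbove (summandCounts S s) :=
  ⟨s, fun _ => le_of_mem_summandCounts⟩

theorem le_ordS {s h : ℕ} (hh : h ∈ summandCounts S s) : h ≤ ordS S s :=
  le_csSup (bddAbove_summandCounts s) hh

theorem ordS_le (s : ℕ) : ordS S s ≤ s :=
  csSup_le' fun _ => le_of_mem_summandCounts

theorem ordS_zero : ordS S 0 = 0 :=
  Nat.le_zero.mp (ordS_le 0)

theorem one_mem_summandCounts {s : ℕ} (hs : s ∈ S) (hs0 : s ≠ 0) : 1 ∈ summandCounts S s :=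
  ⟨fun _ => s, fun _ => ⟨hs, hs0⟩, by simp⟩

theorem add_mem_summandCounts {a b h₁ h₂ : ℕ} (h₁a : h₁ ∈ summandCounts S a)
    (h₂b : h₂ ∈ summandCounts S b) : h₁ + h₂ ∈ summandCounts S (a + b) := by
  obtain ⟨f₁, hf₁, rfl⟩ := h₁a
  obtain ⟨f₂, hf₂, rfl⟩ := h₂b
  refine ⟨Fin.append f₁ f₂, Fin.addCases (by simpa using hf₁) (by simpa using hf₂), ?_⟩
  simp [Fin.sum_univ_add]

theorem ordS_mem_summandCounts {s : ℕ} (hs : s ∈ S) : ordS S s ∈ summandCounts S s := by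
  refine Nat.sSup_mem ?_ (bddAbove_summandCounts s)
  rcases eq_or_ne s 0 with rfl | hs0
  · exact ⟨0, Fin.elim0, fun j => j.elim0, by simp⟩
  · exact ⟨1, one_mem_summandCounts hs hs0⟩

theorem ordS_add_le {a b : ℕ} (ha : a ∈ S) (hb : b ∈ S) :
    ordS S a + ordS S b ≤ ordS S (a + b) :=
  le_ordS (add_mem_summandCounts (ordS_mem_summandCounts ha) (ordS_mem_summandCounts hb))

theorem sum_mem_and_sum_le_ordS_sum {ι : Type*} (h0 : 0 ∈ S)
    (hadd : ∀ a ∈ S, ∀ b ∈ S, a + b ∈ S) {a c : ι → ℕ} (t : Finset ι)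
    (h : ∀ i ∈ t, a i ∈ S ∧ c i ≤ ordS S (a i)) :
    ∑ i ∈ t, a i ∈ S ∧ ∑ i ∈ t, c i ≤ ordS S (∑ i ∈ t, a i) := by
  classical
  induction t using Finset.induction_on with
  | empty => simp [h0]
  | insert i t hi ih =>
    obtain ⟨hai, hci⟩ := h i (mem_insert_self i t)
    obtain ⟨hat, hct⟩ := ih fun j hj => h j (mem_insert_of_mem hj)
    rw [sum_insert hi, sum_insert hi]
    exact ⟨hadd _ hai _ hat, (add_le_add hci hct).trans (ordS_add_le hai hat)⟩

theorem le_ordS_mul (h0 : 0 ∈ S) (hadd : ∀ a ∈ S, ∀ b ∈ S, a + b ∈ S) {x : ℕ} (hx : x ∈ S)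
    (hx0 : x ≠ 0) (c : ℕ) : c ≤ ordS S (c * x) := by
  simpa using (sum_mem_and_sum_le_ordS_sum h0 hadd (a := fun _ => x) (c := fun _ => 1)
    (range c) fun _ _ => ⟨hx, le_ordS (one_mem_summandCounts hx hx0)⟩).2

end Order

section Apery

variable {S : Set ℕ} {m : ℕ}

theorem InApery.of_add (hadd : ∀ a ∈ S, ∀ b ∈ S, a + b ∈ S) {a b : ℕ}
    (h : InApery S m (a + b)) (ha : a ∈ S) (hb : b ∈ S) : InApery S m a :=
  ⟨ha, fun u hu hua => h.2 (u + b) (hadd u hu b hb) (by omega)⟩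

theorem bddAbove_aperySet (hfin : (Sᶜ).Finite) : BddAbove (AperySet S m) := by
  obtain ⟨N, hN⟩ := hfin.bddAbove
  refine ⟨N + m, fun s hs => ?_⟩
  by_contra hlt
  have hsm : s - m ∈ S := by
    by_contra hsm
    have := hN hsm
    omega
  exact hs.2 (s - m) hsm (by omega)

variable {ν : ℕ} {g : Fin ν → ℕ} {i : Fin ν}

theorem bddAbove_betaSet (hfin : (Sᶜ).Finite) (hgi : g i ≠ 0) : BddAbove (betaSet S m g i) := by
  obtain ⟨N, hN⟩ := bddAbove_aperySet (m := m) hfin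
  exact ⟨N, fun h hh => (Nat.le_mul_of_pos_right h (Nat.pos_of_ne_zero hgi)).trans (hN hh.1)⟩

theorem le_betaN (hfin : (Sᶜ).Finite) (hgi : g i ≠ 0) {h : ℕ} (hh : h ∈ betaSet S m g i) :
    h ≤ betaN S m g i :=
  le_csSup (bddAbove_betaSet hfin hgi) hh

theorem betaN_mem_betaSet (hS : IsNumSgp S) (hm : 0 < m) (hgi : g i ≠ 0) :
    betaN S m g i ∈ betaSet S m g i := by
  refine Nat.sSup_mem ⟨0, ⟨⟨?_, fun u _ => by omega⟩, ?_⟩⟩ (bddAbove_betaSet hS.2.2 hgi)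
  · simpa using hS.1
  · simp [ordS_zero]

end Apery

section Representations

variable {S : Set ℕ} {ν : ℕ} {g : Fin ν → ℕ}

theorem Generates.sum_mem (hgen : Generates S g) (lam : Fin ν → ℕ) : ∑ i, lam i * g i ∈ S :=
  (hgen _).2 ⟨lam, rfl⟩

theorem Generates.mul_mem (hgen : Generates S g) (i : Fin ν) (c : ℕ) : c * g i ∈ S :=
  sum_single_mul g i c ▸ hgen.sum_mem _

theorem MinimalGen.ne_zero (hgen : MinimalGen S g) (i : Fin ν) : g i ≠ 0 :=
  fun h => hgen.2 i ⟨0, rfl, by simp [h]⟩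

theorem sum_le_ordS (hS : IsNumSgp S) (hgen : MinimalGen S g) (lam : Fin ν → ℕ) :
    ∑ i, lam i ≤ ordS S (∑ i, lam i * g i) :=
  (sum_mem_and_sum_le_ordS_sum hS.1 hS.2.1 univ fun i _ =>
    ⟨hgen.1.mul_mem i (lam i),
      le_ordS_mul hS.1 hS.2.1 (by simpa using hgen.1.mul_mem i 1) (hgen.ne_zero i) (lam i)⟩).2

theorem exists_rep_of_mem_summandCounts (hgen : Generates S g) {s h : ℕ}
    (hh : h ∈ summandCounts S s) : ∃ ρ : Fin ν → ℕ, ∑ l, ρ l * g l = s ∧ h ≤ ∑ l, ρ l := by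
  obtain ⟨f, hf, rfl⟩ := hh
  choose lam hlam using fun j => (hgen (f j)).1 (hf j).1
  have hpos : ∀ j, 1 ≤ ∑ l, lam j l := fun j => Nat.one_le_iff_ne_zero.2 fun h0 =>
    (hf j).2 <| (hlam j).symm.trans <| sum_eq_zero fun l hl => by
      rw [sum_eq_zero_iff.1 h0 l hl, zero_mul]
  refine ⟨fun l => ∑ j, lam j l, ?_, ?_⟩
  · simp_rw [sum_mul]
    rw [sum_comm]
    exact sum_congr rfl fun j _ => hlam j
  · calc h = ∑ _j : Fin h, 1 := by simp
      _ ≤ ∑ j, ∑ l, lam j l := sum_le_sum fun j _ => hpos j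
      _ = ∑ l, ∑ j, lam j l := sum_comm

theorem exists_isMaxRep (hS : IsNumSgp S) (hgen : MinimalGen S g) {s : ℕ} (hs : s ∈ S) :
    ∃ ρ, IsMaxRep S g ρ s := by
  obtain ⟨ρ, hρ, hle⟩ := exists_rep_of_mem_summandCounts hgen.1 (ordS_mem_summandCounts hs)
  exact ⟨ρ, hρ, le_antisymm (hρ ▸ sum_le_ordS hS hgen ρ) hle⟩

theorem IsMaxRep.of_le (hS : IsNumSgp S) (hgen : MinimalGen S g) {ρ μ : Fin ν → ℕ} {s : ℕ}
    (hρ : IsMaxRep S g ρ s) (hμ : μ ≤ ρ) : IsMaxRep S g μ (∑ i, μ i * g i) := by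
  refine ⟨rfl, le_antisymm (sum_le_ordS hS hgen μ) ?_⟩
  have hcount : ∑ i, μ i + ∑ i, (ρ - μ) i = ∑ i, ρ i := by
    simpa using sum_mul_add_sum_tsub_mul hμ fun _ => 1
  have hsplit := ordS_add_le (hgen.1.sum_mem μ) (hgen.1.sum_mem (ρ - μ))
  rw [sum_mul_add_sum_tsub_mul hμ, hρ.1, ← hρ.2] at hsplit
  have := sum_le_ordS hS hgen (ρ - μ)
  omega

theorem InApery.rep_zero_eq_zero [NeZero ν] (hgen : Generates S g) {ρ : Fin ν → ℕ}
    (hu : InApery S (g 0) (∑ l, ρ l * g l)) : ρ 0 = 0 := by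
  by_contra h
  have hle : (Pi.single 0 1 : Fin ν → ℕ) ≤ ρ := by
    intro j
    rcases eq_or_ne j 0 with rfl | hj
    · simpa using Nat.one_le_iff_ne_zero.2 h
    · simp [Pi.single_eq_of_ne hj]
  refine hu.2 _ (hgen.sum_mem (ρ - Pi.single 0 1)) ?_
  rw [← sum_mul_add_sum_tsub_mul hle, sum_single_mul, one_mul, add_comm]

theorem IsMaxRep.apply_le_betaN (hS : IsNumSgp S) (hgen : MinimalGen S g) {m u : ℕ}
    (hu : InApery S m u) {ρ : Fin ν → ℕ} (hρ : IsMaxRep S g ρ u) (j : Fin ν) :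
    ρ j ≤ betaN S m g j := by
  have hle : (Pi.single j (ρ j) : Fin ν → ℕ) ≤ ρ := by
    intro l
    rcases eq_or_ne l j with rfl | hl
    · simp
    · simp [Pi.single_eq_of_ne hl]
  have hmax := hρ.of_le hS hgen hle
  rw [sum_single_mul] at hmax
  refine le_betaN hS.2.2 (hgen.ne_zero j) ⟨?_, ?_⟩
  · rw [← hρ.1, ← sum_mul_add_sum_tsub_mul hle, sum_single_mul] at hu
    exact hu.of_add hS.2.1 (hgen.1.mul_mem j _) (hgen.1.sum_mem _)
  · simpa using hmax.2.symm

end Representations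

section Rectangular

variable {S : Set ℕ} {ν : ℕ} [NeZero ν] {g : Fin ν → ℕ}

theorem inApery_of_mem_box (hrect : AperySet S (g 0) = Bset S (g 0) g) {μ : Fin ν → ℕ}
    (hμ0 : μ 0 = 0) (hμ : ∀ i, μ i ≤ betaN S (g 0) g i) : InApery S (g 0) (∑ i, μ i * g i) := by
  have hB : ∑ i, μ i * g i ∈ Bset S (g 0) g := ⟨μ, hμ0, hμ, rfl⟩
  rwa [← hrect] at hB

theorem isMaxRep_of_mem_box (hS : IsNumSgp S) (hgen : MinimalGen S g)
    (hrect : AperySet S (g 0) = Bset S (g 0) g) {μ : Fin ν → ℕ} (hμ0 : μ 0 = 0)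
    (hμ : ∀ i, μ i ≤ betaN S (g 0) g i) : IsMaxRep S g μ (∑ i, μ i * g i) := by
  set top := Function.update (betaN S (g 0) g) 0 0
  have htop : ∀ i, top i ≤ betaN S (g 0) g i := fun i => by
    rcases eq_or_ne i 0 with rfl | hi <;> simp [top, *]
  have htop_ap := inApery_of_mem_box hrect (by simp [top]) htop
  obtain ⟨ρ, hρ⟩ := exists_isMaxRep hS hgen htop_ap.1
  have hρ_le : ρ ≤ top := fun i => by
    rcases eq_or_ne i 0 with rfl | hi
    · simp [top, InApery.rep_zero_eq_zero hgen.1 (hρ.1 ▸ htop_ap)]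
    · simpa [top, hi] using hρ.apply_le_betaN hS hgen htop_ap i
  have htop_max : IsMaxRep S g top (∑ i, top i * g i) := by
    refine ⟨rfl, le_antisymm (sum_le_ordS hS hgen top) ?_⟩
    rw [← hρ.2]
    exact sum_le_sum fun i _ => hρ_le i
  exact htop_max.of_le hS hgen fun i => by
    rcases eq_or_ne i 0 with rfl | hi <;> simp [top, *]

theorem uniqueMaxRep_betaN_mul (hS : IsNumSgp S) (hgen : MinimalGen S g)
    (hrect : AperySet S (g 0) = Bset S (g 0) g) {i : Fin ν} (hi : i ≠ 0) :
    UniqueMaxRep S g (betaN S (g 0) g i * g i) := by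
  obtain ⟨hap, hord⟩ :=
    betaN_mem_betaSet hS (Nat.pos_of_ne_zero (hgen.ne_zero 0)) (hgen.ne_zero i)
  set β := betaN S (g 0) g i
  refine ⟨Pi.single i β, ⟨sum_single_mul g i β, by simp [hord]⟩, fun lam hlam => ?_⟩
  have hlam0 : lam 0 = 0 := InApery.rep_zero_eq_zero hgen.1 (hlam.1 ▸ hap)
  have hlam_le := hlam.apply_le_betaN hS hgen hap
  have hsum : ∑ j, lam j = β := hlam.2.trans hord
  have hlam_i : lam i = β := by
    refine le_antisymm (hlam_le i) (not_lt.1 fun hlt => ?_)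
    set μ := lam + Pi.single i 1
    have hμ0 : μ 0 = 0 := by simp [μ, hlam0, Pi.single_eq_of_ne hi.symm]
    have hμ : ∀ j, μ j ≤ betaN S (g 0) g j := fun j => by
      rcases eq_or_ne j i with rfl | hj
      · simpa [μ] using hlt
      · simpa [μ, Pi.single_eq_of_ne hj] using hlam_le j
    have hμ_val : ∑ j, μ j * g j = (β + 1) * g i := by
      simp [μ, add_mul, sum_add_distrib, hlam.1, sum_single_mul]
    have hμ_ord : ordS S ((β + 1) * g i) = β + 1 := by
      rw [← hμ_val, ← (isMaxRep_of_mem_box hS hgen hrect hμ0 hμ).2]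
      simp [μ, sum_add_distrib, hsum]
    have hβ_succ : β + 1 ∈ betaSet S (g 0) g i :=
      ⟨hμ_val ▸ inApery_of_mem_box hrect hμ0 hμ, hμ_ord⟩
    exact absurd (le_betaN hS.2.2 (hgen.ne_zero i) hβ_succ) (by omega)
  have hrest := add_sum_erase univ lam (mem_univ i)
  funext j
  rcases eq_or_ne j i with rfl | hj
  · simp [hlam_i]
  · rw [Pi.single_eq_of_ne hj]
    exact sum_eq_zero_iff.1 (by omega) j (mem_erase.2 ⟨hj, mem_univ j⟩)

end Rectangular

theorem betaRect_beta_eq_gamma_general (S : Set ℕ) {ν : ℕ} [NeZero ν] (g : Fin ν → ℕ)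
    (hS : IsNumSgp S) (hgen : MinimalGen S g)
    (hrect : AperySet S (g 0) = Bset S (g 0) g) :
    ∀ i : Fin ν, i ≠ 0 → betaN S (g 0) g i = gammaN S (g 0) g i := by
  intro i hi
  obtain ⟨hap, hord⟩ :=
    betaN_mem_betaSet hS (Nat.pos_of_ne_zero (hgen.ne_zero 0)) (hgen.ne_zero i)
  have hgreatest : IsGreatest {h | InApery S (g 0) (h * g i) ∧ ordS S (h * g i) = h ∧
      UniqueMaxRep S g (h * g i)} (betaN S (g 0) g i) :=
    ⟨⟨hap, hord, uniqueMaxRep_betaN_mul hS hgen hrect hi⟩,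
      fun _ hh => le_betaN hS.2.2 (hgen.ne_zero i) ⟨hh.1, hh.2.1⟩⟩
  exact hgreatest.csSup_eq.symm

theorem betaRect_beta_eq_gamma (S : Set ℕ) {ν : ℕ} [NeZero ν] (g : Fin ν → ℕ) (hν : 2 ≤ ν)
    (hS : IsNumSgp S) (hgen : MinimalGen S g) (hmono : StrictMono g)
    (hmpos : 0 < g 0) (hmul : ∀ s ∈ S, s ≠ 0 → g 0 ≤ s)
    (hrect : AperySet S (g 0) = Bset S (g 0) g) :
    ∀ i : Fin ν, i ≠ 0 → betaN S (g 0) g i = gammaN S (g 0) g i :=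
  betaRect_beta_eq_gamma_general S g hS hgen hrect
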